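/- Fix a real α > 1 and a real t ≥ 0. With I_d(t) = ∫_1^d k^{−α}(1 − k^{−α})^t dk and H_{d,α} = Σ_{k=1}^d k^{−α}, one has lim_{d→∞} I_d(t) / H_{d,α} = B(1 − 1/α, 1 + t) / (α·ζ(α)), where B(a, b) = ∫_0^1 z^{a−1}(1 − z)^{b−1} dz is the Beta function and ζ is the Riemann zeta function. -/

import Mathlib

/-!
The substitution `z = k ^ (-α)` turns `I_d(t)` into `α⁻¹ ∫_{d^{-α}}^1 z^{-1/α} (1 - z)^t dz`.
For `α > 1` the exponent `-1/α` exceeds `-1`, so the Beta integrand is integrable at `0` and the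
numerator tends to `B(1 - 1/α, 1 + t) / α`, while `H_{d,α}` is a partial sum of the Dirichlet
series of `ζ(α) ≥ 1`.
-/

open Filter MeasureTheory Real Set Topology

theorem intervalIntegrable_rpow_mul_one_sub_rpow {a b : ℝ} (ha : -1 < a) (hb : 0 ≤ b) :
    IntervalIntegrable (fun z => z ^ a * (1 - z) ^ b) volume 0 1 := by
  refine (intervalIntegral.intervalIntegrable_rpow' ha).mono_fun' (by fun_prop) ?_
  rw [uIoc_of_le zero_le_one]
  refine (ae_restrict_iff' measurableSet_Ioc).mpr (ae_of_all _ fun z hz => ?_)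
  have hza : 0 ≤ z ^ a := rpow_nonneg hz.1.le a
  dsimp only
  rw [norm_of_nonneg (mul_nonneg hza (rpow_nonneg (by linarith [hz.2]) b))]
  exact mul_le_of_le_one_right hza (rpow_le_one (by linarith [hz.2]) (by linarith [hz.1]) hb)

theorem integral_rpow_neg_mul_comp_rpow_neg {α a b : ℝ} (hα : 0 < α) (ha : 0 < a) (hb : 0 < b)
    (f : ℝ → ℝ) :
    ∫ x in a..b, x ^ (-α) * f (x ^ (-α)) =
      (∫ z in b ^ (-α)..a ^ (-α), z ^ (-(1 / α)) * f z) / α := by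
  have hpos : ∀ x ∈ uIcc a b, 0 < x := fun x hx => lt_of_lt_of_le (lt_min ha hb) hx.1
  have hsubst := intervalIntegral.integral_comp_mul_deriv_of_deriv_nonpos
    (f := fun x => x ^ (-α)) (f' := fun x => -α * x ^ (-α - 1))
    (g := fun z => z ^ (-(1 / α)) * f z) (a := a) (b := b)
    (fun x hx => (continuousAt_rpow_const x _ (Or.inl (hpos x hx).ne')).continuousWithinAt)
    (fun x hx => hasDerivAt_rpow_const (Or.inl (hpos x (Ioo_subset_Icc_self hx)).ne'))
    (fun x hx => mul_nonpos_of_nonpos_of_nonneg (by linarith)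
      (rpow_nonneg (hpos x (Ioo_subset_Icc_self hx)).le _))
  have hintegrand : EqOn (fun x => ((fun z => z ^ (-(1 / α)) * f z) ∘ fun x => x ^ (-α)) x *
      (-α * x ^ (-α - 1))) (fun x => -α * (x ^ (-α) * f (x ^ (-α)))) (uIcc a b) := by
    intro x hx
    have hx := hpos x hx
    have hinv : (x ^ (-α)) ^ (-(1 / α)) = x := by
      rw [← rpow_mul hx.le, show -α * -(1 / α) = 1 by field_simp, rpow_one]
    have hpow : x * x ^ (-α - 1) = x ^ (-α) := by
      rw [mul_comm, ← rpow_add_one hx.ne', sub_add_cancel]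
    simp only [Function.comp_apply, hinv]
    linear_combination (-α * f (x ^ (-α))) * hpow
  rw [intervalIntegral.integral_congr hintegrand, intervalIntegral.integral_const_mul,
    intervalIntegral.integral_symm (b ^ (-α))] at hsubst
  rw [eq_div_iff hα.ne']
  linarith

theorem tendsto_integral_left_endpoint {g : ℝ → ℝ} {a b : ℝ} (hab : a ≤ b)
    (hg : IntervalIntegrable g volume a b) :
    Tendsto (fun c => ∫ x in c..b, g x) (𝓝[Icc a b] a) (𝓝 (∫ x in a..b, g x)) := by
  have := intervalIntegral.continuousOn_primitive_interval_left
    ((intervalIntegrable_iff_integrableOn_Icc_of_le hab).mp hg |>.mono_set (uIcc_of_le hab).subset)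
  rw [uIcc_of_le hab] at this
  exact this a (left_mem_Icc.mpr hab)

theorem tendsto_integral_rpow_neg_mul_comp_rpow_neg {α : ℝ} (hα : 0 < α) {f : ℝ → ℝ}
    (hf : IntervalIntegrable (fun z => z ^ (-(1 / α)) * f z) volume 0 1) :
    Tendsto (fun d : ℕ => ∫ k in (1 : ℝ)..d, k ^ (-α) * f (k ^ (-α))) atTop
      (𝓝 ((∫ z in (0 : ℝ)..1, z ^ (-(1 / α)) * f z) / α)) := by
  have hlower : Tendsto (fun d : ℕ => (d : ℝ) ^ (-α)) atTop (𝓝[Icc 0 1] 0) := by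
    refine tendsto_nhdsWithin_iff.mpr
      ⟨(tendsto_rpow_neg_atTop hα).comp tendsto_natCast_atTop_atTop, ?_⟩
    filter_upwards [eventually_ge_atTop 1] with d hd
    exact ⟨rpow_nonneg d.cast_nonneg _, rpow_le_one_of_one_le_of_nonpos (by exact_mod_cast hd)
      (by linarith)⟩
  refine (((tendsto_integral_left_endpoint zero_le_one hf).comp hlower).div_const α).congr' ?_
  filter_upwards [eventually_ge_atTop 1] with d hd
  rw [Function.comp_apply, integral_rpow_neg_mul_comp_rpow_neg hα one_pos
    (by exact_mod_cast hd), one_rpow]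

theorem hasSum_rpow_neg_riemannZeta_re {α : ℝ} (hα : 1 < α) :
    HasSum (fun n : ℕ => (n : ℝ) ^ (-α)) (riemannZeta α).re := by
  have hterm (n : ℕ) : 1 / (n : ℂ) ^ (α : ℂ) = (((n : ℝ) ^ (-α) : ℝ) : ℂ) := by
    rw [rpow_neg n.cast_nonneg, Complex.ofReal_inv, Complex.ofReal_cpow n.cast_nonneg, one_div,
      Complex.ofReal_natCast]
  rw [zeta_eq_tsum_one_div_nat_cpow (by simpa using hα), tsum_congr hterm,
    ← Complex.ofReal_tsum, Complex.ofReal_re]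
  exact (Real.summable_nat_rpow.mpr (by linarith)).hasSum

theorem tendsto_sum_Icc_rpow_neg {α : ℝ} (hα : 1 < α) :
    Tendsto (fun d : ℕ => ∑ k ∈ Finset.Icc 1 d, (k : ℝ) ^ (-α)) atTop
      (𝓝 (riemannZeta α).re) := by
  have hsum := (hasSum_rpow_neg_riemannZeta_re hα).tendsto_sum_nat.comp (tendsto_add_atTop_nat 1)
  refine hsum.congr fun d => ?_
  rw [Function.comp_apply, Finset.sum_range_succ', Nat.cast_zero, zero_rpow (by linarith),
    add_zero, Finset.range_eq_Ico, Finset.sum_Ico_add' (fun k : ℕ => (k : ℝ) ^ (-α)),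
    zero_add, Finset.Ico_add_one_right_eq_Icc]

theorem one_le_riemannZeta_re {α : ℝ} (hα : 1 < α) : 1 ≤ (riemannZeta α).re := by
  simpa using le_hasSum (hasSum_rpow_neg_riemannZeta_re hα) 1
    fun n _ => rpow_nonneg n.cast_nonneg _

theorem stmt6 (α t : ℝ) (hα : 1 < α) (ht : 0 ≤ t) :
    Tendsto
      (fun d : ℕ =>
        (∫ k in (1 : ℝ)..(d : ℝ), k ^ (-α) * (1 - k ^ (-α)) ^ t) /
        (∑ k ∈ Finset.Icc 1 d, (k : ℝ) ^ (-α)))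
      atTop
      (nhds ((∫ z in (0 : ℝ)..1, z ^ ((1 - 1 / α) - 1) * (1 - z) ^ ((1 + t) - 1)) /
        (α * (riemannZeta (α : ℂ)).re))) := by
  have hα0 : 0 < α := one_pos.trans hα
  have hexp : -1 < -(1 / α) := neg_lt_neg ((div_lt_one hα0).mpr hα)
  rw [show (1 - 1 / α) - 1 = -(1 / α) by ring, show (1 + t) - 1 = t by ring, ← div_div]
  exact (tendsto_integral_rpow_neg_mul_comp_rpow_neg hα0
    (intervalIntegrable_rpow_mul_one_sub_rpow hexp ht)).div (tendsto_sum_Icc_rpow_neg hα)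
    (one_pos.trans_le (one_le_riemannZeta_re hα)).ne'
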